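/- Let G be a finite group with normal subgroups N and R, set L = N ∩ R and M = NR, and suppose R/L is abelian. Let θ ∈ Irr(L) be G-invariant and let φ ∈ Irr(R) satisfy φ_L = θ. Let B be the stabilizer of φ in G. Then M ∩ B is a normal subgroup of G; indeed M ∩ B = M ∩ B^g for all g ∈ G, where B^g = g⁻¹Bg. -/

import Mathlib

open scoped BigOperators Classical Pointwise

noncomputable section

/-- `f` is the character of an irreducible complex representation of `H`. -/
def IsIrrChar (H : Type) [Group H] (f : H → ℂ) : Prop :=
  ∃ V : FDRep ℂ H, CategoryTheory.Simple V ∧ V.character = f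

/-- `f` is a positive integer multiple of an irreducible character, i.e. homogeneous. -/
def IsHomogeneous (H : Type) [Group H] (f : H → ℂ) : Prop :=
  ∃ (ψ : H → ℂ) (n : ℕ+), IsIrrChar H ψ ∧ f = fun h => (n : ℂ) * ψ h

/-- The standard inner product of class functions on a finite group. -/
def charInner (H : Type) [Group H] [Fintype H] (f g : H → ℂ) : ℂ :=
  (Fintype.card H : ℂ)⁻¹ * ∑ x : H, f x * starRingEnd ℂ (g x)

variable {G : Type} [Group G]

/-- Restriction of a class function along `C ≤ A`. -/
def resSub {A C : Subgroup G} (h : C ≤ A) (f : ↥A → ℂ) : ↥C → ℂ :=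
  fun c => f ⟨(c : G), h c.2⟩

/-- Induction of a class function from `B` to `A`, where `B ≤ A`. -/
def indSub [Fintype G] {B A : Subgroup G} (_h : B ≤ A) (f : ↥B → ℂ) : ↥A → ℂ :=
  fun a => (Fintype.card ↥B : ℂ)⁻¹ *
    ∑ x : ↥A, if hx : (x : G) * (a : G) * (x : G)⁻¹ ∈ B then f ⟨_, hx⟩ else 0

/-- Induction of a class function from `A` to `G`. -/
def indG [Fintype G] (A : Subgroup G) (f : ↥A → ℂ) : G → ℂ :=
  fun g => (Fintype.card ↥A : ℂ)⁻¹ *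
    ∑ x : G, if hx : x * g * x⁻¹ ∈ A then f ⟨_, hx⟩ else 0

/-- `f` (a character of `A`) lies over `γ` (a character of `C ≤ A`), i.e. `γ` is a
constituent of the restriction of `f` to `C`. -/
def LiesOver [Fintype G] {A C : Subgroup G} (h : C ≤ A) (f : ↥A → ℂ) (γ : ↥C → ℂ) : Prop :=
  charInner ↥C (resSub h f) γ ≠ 0

/-- The conjugate `γ^g` equals `γ`, i.e. `γ (g x g⁻¹) = γ x` for all `x ∈ C`. -/
def ConjFix {C : Subgroup G} (γ : ↥C → ℂ) (g : G) : Prop :=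
  ∀ (x : G) (hx : x ∈ C) (hx' : g * x * g⁻¹ ∈ C), γ ⟨g * x * g⁻¹, hx'⟩ = γ ⟨x, hx⟩

/-- The conjugate character `φ^g`, given by `φ^g (x) = φ (g x g⁻¹)`, for `R` normal. -/
def conjChar {R : Subgroup G} (hR : R.Normal) (φ : ↥R → ℂ) (g : G) : ↥R → ℂ :=
  fun x => φ ⟨g * (x : G) * g⁻¹, hR.conj_mem (x : G) x.2 g⟩

/-- A character pair `(A, α)` in `G` inducing the character `χ` of `G`. -/
structure CharPair (G : Type) [Group G] [Fintype G] (χ : G → ℂ) where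
  A : Subgroup G
  α : ↥A → ℂ
  irr : IsIrrChar ↥A α
  ind_eq : indG A α = χ

/-- `w = (B, β)` arises from `v = (A, α)` by a Clifford correspondence with respect to a
character pair `(C, γ)` with `C ◁ A` and `C ⊆ N`: `B` is the stabilizer of `γ` in `A` and
`β` is the Clifford correspondent of `α` with respect to `γ`. -/
def EdgeSpec [Fintype G] {χ : G → ℂ} (N : Subgroup G) (v w : CharPair G χ) : Prop :=
  ∃ (C : Subgroup G) (γ : ↥C → ℂ) (_hCA : C ≤ v.A) (hCB : C ≤ w.A) (hBA : w.A ≤ v.A),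
    (∀ a ∈ v.A, ∀ c ∈ C, a * c * a⁻¹ ∈ C) ∧
    C ≤ N ∧
    IsIrrChar ↥C γ ∧
    ((w.A : Set G) = {a : G | a ∈ v.A ∧ ConjFix γ a}) ∧
    LiesOver hCB w.α γ ∧
    indSub hBA w.α = v.α

/-- The Clifford induction graph `C_N(χ)`. -/
def cliffordGraph [Fintype G] (χ : G → ℂ) (N : Subgroup G) : SimpleGraph (CharPair G χ) where
  Adj v w := v ≠ w ∧ (EdgeSpec N v w ∨ EdgeSpec N w v)
  symm := ⟨fun v w h => ⟨h.1.symm, h.2.symm⟩⟩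
  loopless := ⟨fun v h => h.1 rfl⟩

/-- The set `Δ` of linear characters `λ` of `R` trivial on `L = N ⊓ R` such that
`φλ = φ^g` for some `g ∈ N`. -/
def Delta (N R : Subgroup G) (φ : ↥R → ℂ) : Set (↥R →* ℂˣ) :=
  {lam | (∀ x : ↥R, (x : G) ∈ N ⊓ R → lam x = 1) ∧
    ∃ g ∈ N, ∀ (x : ↥R) (hx : g * (x : G) * g⁻¹ ∈ R),
      φ x * (lam x : ℂ) = φ ⟨g * (x : G) * g⁻¹, hx⟩}

/-!
Gallagher's argument: since `θ` is `G`-invariant, `φ^g` and `φ` both restrict to `θ` on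
`L = N ⊓ R`, and summing `⟨φ^g, λφ⟩` over the linear characters `λ` of the abelian group `R/L`
gives a nonzero multiple of `⟨θ, θ⟩ = 1`; so `φ^g = λφ` for some such `λ`. As
`⁅N ⊔ R, R⁆ ≤ L`, every such `λ` is invariant under `M = N ⊔ R`, so each `m ∈ M` fixing `φ` also
fixes `φ^g`, i.e. `g m g⁻¹` fixes `φ`. Hence `M ⊓ B` is normal and
`M ⊓ B^g = (M ⊓ B)^g = M ⊓ B`.
-/

open CategoryTheory

section LinearTwist

variable {H : Type} [Group H]

def linearTwistRep (lam : H →* ℂˣ) (V : FDRep ℂ H) : Representation ℂ H V where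
  toFun x := (lam x : ℂ) • V.ρ x
  map_one' := by simp
  map_mul' x y := by
    ext v
    simp [smul_smul, mul_comm]

def linearTwist (lam : H →* ℂˣ) : FDRep ℂ H ⥤ FDRep ℂ H where
  obj V := FDRep.of (linearTwistRep lam V)
  map {V W} f :=
    { hom := f.hom
      comm := fun x => by
        ext v
        change f.hom.hom.hom ((lam x : ℂ) • V.ρ x v) = (lam x : ℂ) • W.ρ x (f.hom.hom.hom v)
        rw [map_smul]
        exact congrArg _ (congrArg (fun g => g.hom.hom v) (f.comm x)) }

lemma linearTwist_linearTwist_ρ (lam μ : H →* ℂˣ) (hμ : ∀ x, μ x * lam x = 1)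
    (V : FDRep ℂ H) (x : H) :
    ((linearTwist μ).obj ((linearTwist lam).obj V)).ρ x = V.ρ x := by
  change (μ x : ℂ) • (lam x : ℂ) • V.ρ x = V.ρ x
  rw [smul_smul, ← Units.val_mul, hμ, Units.val_one, one_smul]

def linearTwistEquiv (lam : H →* ℂˣ) : FDRep ℂ H ≌ FDRep ℂ H where
  functor := linearTwist lam
  inverse := linearTwist lam⁻¹
  unitIso := NatIso.ofComponents fun V => Action.mkIso (Iso.refl _) fun x => by
    ext v
    exact LinearMap.congr_fun
      (linearTwist_linearTwist_ρ lam lam⁻¹ (fun x => inv_mul_cancel _) V x).symm v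
  counitIso := NatIso.ofComponents fun V => Action.mkIso (Iso.refl _) fun x => by
    ext v
    exact LinearMap.congr_fun
      (linearTwist_linearTwist_ρ lam⁻¹ lam (fun x => mul_inv_cancel _) V x) v

end LinearTwist

section IrreducibleCharacters

variable {H : Type} [Group H] {f : H → ℂ}

theorem IsIrrChar.comp_mulEquiv {H' : Type} [Group H'] (e : H' ≃* H) (hf : IsIrrChar H f) :
    IsIrrChar H' (f ∘ e) := by
  obtain ⟨V, hV, rfl⟩ := hf
  exact ⟨(Action.resEquiv _ e).functor.obj V, simple_obj _ V, rfl⟩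

theorem IsIrrChar.monoidHom_mul (lam : H →* ℂˣ) (hf : IsIrrChar H f) :
    IsIrrChar H (fun x => (lam x : ℂ) * f x) := by
  obtain ⟨V, hV, rfl⟩ := hf
  refine ⟨(linearTwistEquiv lam).functor.obj V, simple_obj _ V, funext fun x => ?_⟩
  change LinearMap.trace ℂ V ((lam x : ℂ) • V.ρ x) = _
  rw [map_smul, smul_eq_mul]
  rfl

end IrreducibleCharacters

section Orthogonality

variable {H : Type} [Group H] [Fintype H]

theorem FDRep.sum_char_mul_char_inv (V W : FDRep ℂ H) [Simple V] [Simple W] :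
    ∑ x, V.character x * W.character x⁻¹ = if Nonempty (V ≅ W) then (Nat.card H : ℂ) else 0 := by
  have hcard : (Nat.card H : ℂ) ≠ 0 := Nat.cast_ne_zero.mpr Nat.card_pos.ne'
  let : Invertible (Nat.card H : ℂ) := invertibleOfNonzero hcard
  have h := FDRep.char_orthonormal V W
  rw [inv_mul_eq_iff_eq_mul₀ hcard] at h
  rw [h]
  split_ifs <;> simp

variable {f f' : H → ℂ}

theorem IsIrrChar.sum_mul_inv_self (hf : IsIrrChar H f) : ∑ x, f x * f x⁻¹ = Nat.card H := by
  obtain ⟨V, hV, rfl⟩ := hf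
  rw [FDRep.sum_char_mul_char_inv, if_pos ⟨Iso.refl V⟩]

theorem IsIrrChar.eq_of_sum_mul_inv_ne_zero (hf : IsIrrChar H f) (hf' : IsIrrChar H f')
    (h : ∑ x, f x * f' x⁻¹ ≠ 0) : f = f' := by
  obtain ⟨V, hV, rfl⟩ := hf
  obtain ⟨W, hW, rfl⟩ := hf'
  rw [FDRep.sum_char_mul_char_inv] at h
  split_ifs at h with hVW
  · exact FDRep.char_iso hVW.some
  · exact absurd rfl h

end Orthogonality

theorem sum_monoidHom_units_apply {Q : Type} [CommGroup Q] [Finite Q] [Fintype (Q →* ℂˣ)]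
    (q : Q) : ∑ lam : Q →* ℂˣ, (lam q : ℂ) = if q = 1 then (Nat.card (Q →* ℂˣ) : ℂ) else 0 := by
  split_ifs with hq
  · simp [hq, Nat.card_eq_fintype_card]
  have : NeZero (Monoid.exponent Q) := ⟨Monoid.ExponentExists.of_finite.exponent_ne_zero⟩
  obtain ⟨lam₀, hlam₀⟩ := CommGroup.exists_apply_ne_one_of_hasEnoughRootsOfUnity Q ℂ hq
  have hmul : (lam₀ q : ℂ) * ∑ lam : Q →* ℂˣ, (lam q : ℂ) = ∑ lam : Q →* ℂˣ, (lam q : ℂ) := by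
    rw [Finset.mul_sum]
    exact Fintype.sum_equiv (Equiv.mulLeft lam₀) _ _ fun lam => by simp
  have hne : (lam₀ q : ℂ) ≠ 1 := fun h => hlam₀ (Units.ext h)
  exact eq_zero_of_mul_eq_self_left hne hmul

theorem IsIrrChar.exists_eq_mul_of_eq_on_ker {H Q : Type} [Group H] [Fintype H]
    [CommGroup Q] [Finite Q] (π : H →* Q) {φ ψ : H → ℂ} (hφ : IsIrrChar H φ)
    (hψ : IsIrrChar H ψ) (hφK : IsIrrChar π.ker fun k => φ k)
    (hψφ : ∀ k ∈ π.ker, ψ k = φ k) :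
    ∃ lam : Q →* ℂˣ, ψ = fun x => (lam (π x) : ℂ) * φ x := by
  have : NeZero (Monoid.exponent Q) := ⟨Monoid.ExponentExists.of_finite.exponent_ne_zero⟩
  have : Finite (Q →* ℂˣ) :=
    .of_equiv Q (CommGroup.monoidHom_mulEquiv_of_hasEnoughRootsOfUnity Q ℂ).some.toEquiv.symm
  have : Fintype (Q →* ℂˣ) := .ofFinite _
  by_contra! hne
  have horth (lam : Q →* ℂˣ) : ∑ x, ψ x * ((lam (π x⁻¹) : ℂ) * φ x⁻¹) = 0 := by
    by_contra h
    exact hne lam (hψ.eq_of_sum_mul_inv_ne_zero (hφ.monoidHom_mul (lam.comp π)) h)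
  -- Summing over `lam` kills every term off `ker π`, where `ψ` agrees with `φ`.
  have hsum : ∑ lam : Q →* ℂˣ, ∑ x, ψ x * ((lam (π x⁻¹) : ℂ) * φ x⁻¹) =
      Nat.card (Q →* ℂˣ) * Nat.card π.ker := by
    calc _ = ∑ x, ψ x * φ x⁻¹ * ∑ lam : Q →* ℂˣ, (lam (π x⁻¹) : ℂ) := by
          rw [Finset.sum_comm]
          refine Finset.sum_congr rfl fun x _ => ?_
          rw [Finset.mul_sum]
          exact Finset.sum_congr rfl fun lam _ => by ring
      _ = ∑ x, if x ∈ π.ker then (Nat.card (Q →* ℂˣ) : ℂ) * (φ x * φ x⁻¹) else 0 := by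
          refine Finset.sum_congr rfl fun x _ => ?_
          rw [sum_monoidHom_units_apply, map_inv, inv_eq_one, ← MonoidHom.mem_ker]
          split_ifs with hx
          · rw [hψφ x hx]; ring
          · rw [mul_zero]
      _ = Nat.card (Q →* ℂˣ) * ∑ k : π.ker, φ k * φ (k⁻¹ : π.ker) := by
          rw [← Finset.sum_filter, Finset.sum_subtype (p := (· ∈ π.ker)) _ fun x => by simp,
            Finset.mul_sum]
          rfl
      _ = _ := by rw [hφK.sum_mul_inv_self]
  rw [Finset.sum_eq_zero fun lam _ => horth lam] at hsum
  exact (mul_ne_zero (Nat.cast_ne_zero.mpr Nat.card_pos.ne') (Nat.cast_ne_zero.mpr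
    Nat.card_pos.ne')) hsum.symm

section Conjugation

variable {R : Subgroup G} [hR : R.Normal] (φ : ↥R → ℂ)

theorem conjChar_eq_comp (g : G) : conjChar hR φ g = φ ∘ MulAut.conjNormal g :=
  funext fun x => congrArg φ (Subtype.ext (MulAut.conjNormal_apply g x).symm)

theorem conjChar_one : conjChar hR φ 1 = φ :=
  funext fun x => congrArg φ (Subtype.ext (by simp))

theorem conjChar_mul (g h : G) : conjChar hR φ (g * h) = conjChar hR (conjChar hR φ g) h :=
  funext fun x => congrArg φ (Subtype.ext (by simp [mul_assoc]))

theorem conjChar_pointwise_mul (f : ↥R → ℂ) (g : G) :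
    conjChar hR (f * φ) g = conjChar hR f g * conjChar hR φ g :=
  rfl

theorem conjFix_iff_conjChar_eq (g : G) : ConjFix φ g ↔ conjChar hR φ g = φ :=
  ⟨fun h => funext fun x => h x x.2 _, fun h x hx _ => congrFun h ⟨x, hx⟩⟩

end Conjugation

theorem Subgroup.commutator_le_subgroupOf {L R : Subgroup G} (h : ⁅R, R⁆ ≤ L) :
    _root_.commutator R ≤ L.subgroupOf R :=
  Subgroup.map_le_iff_le_comap.mp (R.map_subtype_commutator ▸ h)

section Stabilizer

open scoped commutatorElement

variable {N R : Subgroup G} [N.Normal] [hR : R.Normal]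

theorem commutatorElement_mem_inf_of_mem_sup (habel : ⁅R, R⁆ ≤ N ⊓ R) {m x : G}
    (hm : m ∈ N ⊔ R) (hx : x ∈ R) : ⁅m, x⁆ ∈ N ⊓ R := by
  obtain ⟨n, hn, r, hr, rfl⟩ := Subgroup.mem_sup_of_normal_right.mp hm
  rw [commutatorElement_mul_left_eq_conj_mul]
  exact mul_mem ((inferInstance : (N ⊓ R).Normal).conj_mem _
    (habel (Subgroup.commutator_mem_commutator hr hx)) n)
    (Subgroup.commutator_le_inf N R (Subgroup.commutator_mem_commutator hn hx))

theorem conjChar_quotientChar_of_mem_sup (habel : ⁅R, R⁆ ≤ N ⊓ R)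
    (lam : ↥R ⧸ (N ⊓ R).subgroupOf R →* ℂˣ) {m : G} (hm : m ∈ N ⊔ R) :
    conjChar hR (fun x : ↥R => (lam x : ℂ)) m = fun x : ↥R => (lam x : ℂ) := by
  funext x
  refine congrArg (fun q => (lam q : ℂ)) (QuotientGroup.eq.mpr ?_)
  rw [Subgroup.mem_subgroupOf]
  convert commutatorElement_mem_inf_of_mem_sup habel hm (inv_mem x.2) using 1
  simp [commutatorElement_def, mul_assoc]

variable [Fintype G]

theorem exists_conjChar_eq_quotientChar_mul (habel : ⁅R, R⁆ ≤ N ⊓ R)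
    {θ : ↥(N ⊓ R) → ℂ} (hθ : IsIrrChar ↥(N ⊓ R) θ) (hθinv : ∀ g : G, ConjFix θ g)
    {φ : ↥R → ℂ} (hφ : IsIrrChar ↥R φ) (hφθ : resSub (inf_le_right : N ⊓ R ≤ R) φ = θ)
    (g : G) :
    ∃ lam : ↥R ⧸ (N ⊓ R).subgroupOf R →* ℂˣ,
      conjChar hR φ g = (fun x : ↥R => (lam x : ℂ)) * φ := by
  subst hφθ
  have hcomm := Subgroup.Normal.quotient_commutative_iff_commutator_le.mpr
    (Subgroup.commutator_le_subgroupOf habel)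
  let : CommGroup (↥R ⧸ (N ⊓ R).subgroupOf R) := { mul_comm := hcomm.is_comm.comm }
  let π := QuotientGroup.mk' ((N ⊓ R).subgroupOf R)
  refine hφ.exists_eq_mul_of_eq_on_ker π ?_ ?_ ?_
  · rw [conjChar_eq_comp]
    exact hφ.comp_mulEquiv _
  · exact hθ.comp_mulEquiv ((MulEquiv.subgroupCongr (QuotientGroup.ker_mk' _)).trans
      (Subgroup.subgroupOfEquivOfLe inf_le_right))
  · intro k hk
    rw [QuotientGroup.ker_mk', Subgroup.mem_subgroupOf] at hk
    have hk' : g * k * g⁻¹ ∈ N ⊓ R := Subgroup.Normal.conj_mem inferInstance _ hk g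
    exact hθinv g k hk hk'

theorem conjFix_conj_of_mem_sup (habel : ⁅R, R⁆ ≤ N ⊓ R)
    {θ : ↥(N ⊓ R) → ℂ} (hθ : IsIrrChar ↥(N ⊓ R) θ) (hθinv : ∀ g : G, ConjFix θ g)
    {φ : ↥R → ℂ} (hφ : IsIrrChar ↥R φ) (hφθ : resSub (inf_le_right : N ⊓ R ≤ R) φ = θ)
    {m : G} (hm : m ∈ N ⊔ R) (hfix : ConjFix φ m) (g : G) : ConjFix φ (g * m * g⁻¹) := by
  obtain ⟨lam, hlam⟩ := exists_conjChar_eq_quotientChar_mul habel hθ hθinv hφ hφθ g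
  rw [conjFix_iff_conjChar_eq] at hfix ⊢
  have hfix' : conjChar hR (conjChar hR φ g) m = conjChar hR φ g := by
    rw [hlam, conjChar_pointwise_mul, conjChar_quotientChar_of_mem_sup habel lam hm, hfix]
  rw [conjChar_mul, conjChar_mul, hfix', ← conjChar_mul, mul_inv_cancel, conjChar_one]

end Stabilizer

/-- With `N, R ◁ G`, `L = N ⊓ R`, `M = NR`, `R/L` abelian, `θ ∈ Irr(L)` `G`-invariant,
`φ ∈ Irr(R)` with `φ_L = θ`, and `B` the stabilizer of `φ` in `G`: one has
`M ⊓ B = M ⊓ B^g` for all `g ∈ G` (where `B^g = g⁻¹Bg`), and `M ⊓ B` is normal in `G`. -/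
theorem statement15 {G : Type} [Group G] [Fintype G] (N R : Subgroup G)
    [hN : N.Normal] [hR : R.Normal]
    (habel : ⁅R, R⁆ ≤ N ⊓ R)
    (θ : ↥(N ⊓ R) → ℂ) (hθ : IsIrrChar ↥(N ⊓ R) θ) (hθinv : ∀ g : G, ConjFix θ g)
    (φ : ↥R → ℂ) (hφ : IsIrrChar ↥R φ)
    (hφθ : resSub (inf_le_right : N ⊓ R ≤ R) φ = θ)
    (B : Subgroup G) (hB : ∀ g : G, g ∈ B ↔ ConjFix φ g) :
    (∀ g : G, (N ⊔ R) ⊓ B =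
      (N ⊔ R) ⊓ Subgroup.map (MulAut.conj g⁻¹).toMonoidHom B) ∧
    ((N ⊔ R) ⊓ B).Normal := by
  have hnormal : ((N ⊔ R) ⊓ B).Normal := ⟨fun m ⟨hmM, hmB⟩ g =>
    ⟨Subgroup.Normal.conj_mem inferInstance m hmM g, (hB _).mpr
      (conjFix_conj_of_mem_sup habel hθ hθinv hφ hφθ hmM ((hB m).mp hmB) g)⟩⟩
  refine ⟨fun g => ?_, hnormal⟩
  calc (N ⊔ R) ⊓ B = MulAut.conj g⁻¹ • ((N ⊔ R) ⊓ B) :=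
        (Subgroup.Normal.conj_smul_eq_self _ _).symm
    _ = (N ⊔ R) ⊓ Subgroup.map (MulAut.conj g⁻¹).toMonoidHom B := by
        rw [Subgroup.smul_inf, Subgroup.Normal.conj_smul_eq_self]
        rfl
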